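/- arXiv:2109.07507 — 6 statements merged into one kernel-verified Lean document; each statement's English description precedes it below -/
import Mathlib

section
/- Let p ∈ ℂ[z₁,…,z_d] be a polynomial with no zeros in ℍ^d and with p(0)=0. Write the homogeneous expansion p = Σ_{j=M}^{n} P_j, where P_j is homogeneous of degree j and P_M ≢ 0. Then P_M has no zeros in ℍ^d, and there exists μ ∈ ℂ with |μ| = 1 such that μP_M has real coefficients. -/
/-!
For `z ∈ ℍ^d` and any `w`, the one-variable polynomials `t ↦ p(s z + t s (w - z))`, `s > 0`, have
degree at most `deg p` and no roots in a disc `|t| < ρ` independent of `s`, because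
`s (z + t (w - z))` stays in `ℍ^d`. Comparing their values at `t = 1` and `t = 0` through the
root factorization gives `‖p(s w)‖ ≤ C ‖p(s z)‖` uniformly in `s`; dividing by `s^M` and letting
`s → 0⁺` gives `‖P_M(w)‖ ≤ C ‖P_M(z)‖`, so a zero of `P_M` in `ℍ^d` would force `P_M = 0`.

For `x, y` in the positive orthant, `t ↦ P_M(x + t y)` has only real roots: a root `r` with
`Im r ≠ 0` puts `x + r y` or `-(x + r y)` in `ℍ^d`, and `P_M(-u) = (-1)^M P_M(u)`. So
`P_M(x) / P_M(x + y)` is real, all values of `P_M` on the orthant are real multiples of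
`v = P_M(1, …, 1)`, and `(‖v‖ / v) P_M` is a polynomial that is real on a product of infinite sets,
hence equal to its coefficientwise conjugate.
-/

namespace MvPolynomial

variable {σ R : Type*} [CommSemiring R]

theorem IsHomogeneous.eval_smul {φ : MvPolynomial σ R} {n : ℕ} (hφ : φ.IsHomogeneous n)
    (c : R) (z : σ → R) : eval (c • z) φ = c ^ n * eval z φ := by
  simp only [eval_eq, Finset.mul_sum, Pi.smul_apply, smul_eq_mul, mul_pow,
    Finset.prod_mul_distrib, Finset.prod_pow_eq_pow_sum]
  refine Finset.sum_congr rfl fun m hm => ?_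
  rw [← hφ (mem_support_iff.mp hm), Finsupp.weight_apply]
  simp only [Pi.one_apply, smul_eq_mul, mul_one, Finsupp.sum]
  ring

theorem eval_smul_eq_sum_homogeneousComponent (p : MvPolynomial σ R) (c : R) (z : σ → R) :
    eval (c • z) p =
      ∑ j ∈ Finset.range (p.totalDegree + 1), c ^ j * eval z (homogeneousComponent j p) := by
  conv_lhs => rw [← sum_homogeneousComponent p]
  simp only [map_sum, (homogeneousComponent_isHomogeneous _ p).eval_smul]

theorem exists_eval_smul_eq_pow_mul {p : MvPolynomial σ R} {M : ℕ}
    (hlow : ∀ j < M, homogeneousComponent j p = 0) (z : σ → R) :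
    ∃ ψ : Polynomial R, ψ.eval 0 = eval z (homogeneousComponent M p) ∧
      ∀ c, eval (c • z) p = c ^ M * ψ.eval c := by
  -- `ψ = ∑ⱼ Pⱼ(z) X^(j - M)`; the truncated `j - M` is harmless because `Pⱼ = 0` for `j < M`.
  refine ⟨∑ j ∈ Finset.range (p.totalDegree + 1),
    Polynomial.C (eval z (homogeneousComponent j p)) * Polynomial.X ^ (j - M), ?_, fun c => ?_⟩
  · simp only [Polynomial.eval_finsetSum, Polynomial.eval_mul, Polynomial.eval_C,
      Polynomial.eval_pow, Polynomial.eval_X]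
    rw [Finset.sum_eq_single M]
    · simp
    · intro j _ hj
      rcases lt_or_gt_of_ne hj with hlt | hgt
      · simp [hlow j hlt]
      · simp [Nat.sub_ne_zero_of_lt hgt]
    · intro hM
      rw [homogeneousComponent_eq_zero M p (by simpa using hM)]
      simp
  · rw [eval_smul_eq_sum_homogeneousComponent, Polynomial.eval_finsetSum, Finset.mul_sum]
    refine Finset.sum_congr rfl fun j _ => ?_
    simp only [Polynomial.eval_mul, Polynomial.eval_C, Polynomial.eval_pow, Polynomial.eval_X]
    rcases lt_or_ge j M with hj | hj
    · simp [hlow j hj]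
    · obtain ⟨k, rfl⟩ := Nat.exists_eq_add_of_le hj
      rw [Nat.add_sub_cancel_left, pow_add]
      ring

noncomputable def restrictLine (p : MvPolynomial σ R) (a b : σ → R) : Polynomial R :=
  aeval (fun i => Polynomial.C (b i) * Polynomial.X + Polynomial.C (a i)) p

theorem eval_restrictLine (p : MvPolynomial σ R) (a b : σ → R) (t : R) :
    (restrictLine p a b).eval t = eval (a + t • b) p := by
  have hid : (Polynomial.evalRingHom t).comp Polynomial.C = RingHom.id R := by ext; simp
  simp only [restrictLine, aeval_def, polynomial_eval_eval₂, Polynomial.algebraMap_eq, hid,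
    Polynomial.eval_add, Polynomial.eval_mul, Polynomial.eval_C, Polynomial.eval_X]
  congr 1
  ext i
  simp [add_comm, mul_comm]

theorem natDegree_aeval_le_totalDegree {f : σ → Polynomial R}
    (hf : ∀ i, (f i).natDegree ≤ 1) (p : MvPolynomial σ R) :
    (aeval f p).natDegree ≤ p.totalDegree := by
  conv_lhs => rw [p.as_sum]
  rw [map_sum]
  refine Polynomial.natDegree_sum_le_of_forall_le _ _ fun m hm => ?_
  rw [aeval_monomial, Polynomial.algebraMap_eq]
  refine (Polynomial.natDegree_C_mul_le _ _).trans <| (Polynomial.natDegree_prod_le _ _).trans ?_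
  refine (Finset.sum_le_sum fun i _ => Polynomial.natDegree_pow_le_of_le (m i) (hf i)).trans ?_
  simpa [Finsupp.sum] using le_totalDegree hm

theorem natDegree_restrictLine_le (p : MvPolynomial σ R) (a b : σ → R) :
    (restrictLine p a b).natDegree ≤ p.totalDegree :=
  natDegree_aeval_le_totalDegree (fun _ => Polynomial.natDegree_linear_le) p

theorem im_coeff_eq_zero_of_forall_im_eval_ofReal_eq_zero {q : MvPolynomial σ ℂ}
    (h : ∀ x : σ → ℝ, (∀ i, 0 < x i) → (eval (fun i => (x i : ℂ)) q).im = 0)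
    (m : σ →₀ ℕ) : (coeff m q).im = 0 := by
  have hconj : map (starRingEnd ℂ) q = q := by
    refine funext_set (fun _ => Complex.ofReal '' Set.Ioi 0)
      (fun _ => (Set.Ioi_infinite 0).image Complex.ofReal_injective.injOn) fun z hz => ?_
    choose x hx hxz using fun i => hz i (Set.mem_univ i)
    obtain rfl : (fun i => (x i : ℂ)) = z := _root_.funext hxz
    rw [eval_map, ← Complex.conj_eq_iff_im.2 (h x hx), eval, coe_eval₂Hom, eval₂_comp_left,
      RingHom.comp_id]
    congr 1
    ext i
    simp
  rw [← Complex.conj_eq_iff_im, ← coeff_map, hconj]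

end MvPolynomial

theorem Polynomial.norm_eval_le_of_forall_mem_roots {K : Type*} [NormedField K] [IsAlgClosed K]
    {Q : Polynomial K} {n : ℕ} {ρ : ℝ} (hQ : Q.natDegree ≤ n) (hρ : 0 < ρ)
    (hroots : ∀ r ∈ Q.roots, ρ ≤ ‖r‖) (x : K) :
    ‖Q.eval x‖ ≤ ((‖x‖ + ρ) / ρ) ^ n * ‖Q.eval 0‖ := by
  set c := (‖x‖ + ρ) / ρ
  have hc : 1 ≤ c := by rw [le_div_iff₀ hρ]; linarith [norm_nonneg x]
  have hfactor : ∀ r ∈ Q.roots, ‖x - r‖ ≤ c * ‖0 - r‖ := fun r hr => by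
    rw [zero_sub, norm_neg, div_mul_eq_mul_div, le_div_iff₀ hρ]
    have := hroots r hr
    nlinarith [norm_sub_le x r, norm_nonneg x]
  have hsplit := IsAlgClosed.splits Q
  have hnorm (s : Multiset K) : ‖s.prod‖ = (s.map (‖·‖)).prod :=
    map_multiset_prod (normHom : K →*₀ ℝ) s
  rw [hsplit.eval_eq_prod_roots, hsplit.eval_eq_prod_roots, norm_mul, norm_mul, hnorm, hnorm,
    Multiset.map_map, Multiset.map_map]
  calc ‖Q.leadingCoeff‖ * (Q.roots.map fun r => ‖x - r‖).prod
      ≤ ‖Q.leadingCoeff‖ * (Q.roots.map fun r => c * ‖0 - r‖).prod :=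
        mul_le_mul_of_nonneg_left (Multiset.prod_map_le_prod_map₀ _ _
          (fun _ _ => norm_nonneg _) hfactor) (norm_nonneg _)
    _ ≤ c ^ n * (‖Q.leadingCoeff‖ * (Q.roots.map fun r => ‖0 - r‖).prod) := by
        rw [Multiset.prod_map_mul, Multiset.map_const', Multiset.prod_replicate, mul_left_comm]
        gcongr
        · refine mul_nonneg (norm_nonneg _) (Multiset.prod_nonneg fun a ha => ?_)
          obtain ⟨r, -, rfl⟩ := Multiset.mem_map.mp ha
          exact norm_nonneg _
        · exact (Q.card_roots').trans hQ

theorem Polynomial.exists_eval_ofReal_eq_real_mul {g : Polynomial ℂ}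
    (hg : ∀ r ∈ g.roots, r.im = 0) (a b : ℝ) (hb : g.eval (b : ℂ) ≠ 0) :
    ∃ γ : ℝ, g.eval (a : ℂ) = γ * g.eval (b : ℂ) := by
  have hreal (t : ℝ) :
      (g.roots.map fun r => (t : ℂ) - r).prod = ((g.roots.map fun r => t - r.re).prod : ℝ) := by
    symm
    rw [← Complex.ofRealHom_eq_coe, map_multiset_prod, Multiset.map_map]
    refine congrArg _ (Multiset.map_congr rfl fun r hr => ?_)
    simp [Complex.ext_iff, hg r hr]
  have hsplit := IsAlgClosed.splits g
  simp only [hsplit.eval_eq_prod_roots, hreal] at hb ⊢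
  refine ⟨(g.roots.map fun r => a - r.re).prod / (g.roots.map fun r => b - r.re).prod, ?_⟩
  have := right_ne_zero_of_mul hb
  push_cast
  field_simp

theorem exists_pos_forall_im_add_mul_pos {σ : Type*} [Finite σ] {z : σ → ℂ}
    (hz : ∀ i, 0 < (z i).im) (v : σ → ℂ) :
    ∃ ρ > 0, ∀ r : ℂ, ‖r‖ < ρ → ∀ i, 0 < (z i + r * v i).im := by
  have hopen : IsOpen {r : ℂ | ∀ i, 0 < (z i + r * v i).im} := by
    simp only [Set.ofPred_forall]
    exact isOpen_iInter_of_finite fun i => isOpen_lt continuous_const (by fun_prop)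
  obtain ⟨ρ, hρ, hball⟩ := Metric.isOpen_iff.mp hopen 0 (by simpa using hz)
  exact ⟨ρ, hρ, fun r hr => hball (by simpa using hr)⟩

namespace MvPolynomial

variable {σ : Type*}

def IsStable (p : MvPolynomial σ ℂ) : Prop :=
  ∀ z : σ → ℂ, (∀ i, 0 < (z i).im) → eval z p ≠ 0

variable {p : MvPolynomial σ ℂ} {M : ℕ}

theorem IsStable.exists_norm_eval_smul_le [Finite σ] (hp : p.IsStable) {z : σ → ℂ}
    (hz : ∀ i, 0 < (z i).im) (w : σ → ℂ) :
    ∃ C : ℝ, ∀ s : ℝ, 0 < s → ‖eval ((s : ℂ) • w) p‖ ≤ C * ‖eval ((s : ℂ) • z) p‖ := by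
  obtain ⟨ρ, hρ, hline⟩ := exists_pos_forall_im_add_mul_pos hz (w - z)
  refine ⟨((1 + ρ) / ρ) ^ p.totalDegree, fun s hs => ?_⟩
  set Q := restrictLine p ((s : ℂ) • z) ((s : ℂ) • (w - z))
  have hQ (t : ℂ) : Q.eval t = eval ((s : ℂ) • (z + t • (w - z))) p := by
    rw [eval_restrictLine, smul_add, smul_comm]
  have hroots : ∀ r ∈ Q.roots, ρ ≤ ‖r‖ := by
    intro r hr
    by_contra! hlt
    refine hp _ (fun i => ?_) ((hQ r).symm.trans (Polynomial.isRoot_of_mem_roots hr))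
    simpa using mul_pos hs (hline r hlt i)
  have := Polynomial.norm_eval_le_of_forall_mem_roots (natDegree_restrictLine_le _ _ _) hρ
    hroots 1
  rw [hQ, hQ] at this
  simpa using this

theorem IsStable.homogeneousComponent_of_forall_lt_eq_zero [Finite σ] (hp : p.IsStable)
    (hM : homogeneousComponent M p ≠ 0) (hlow : ∀ j < M, homogeneousComponent j p = 0) :
    (homogeneousComponent M p).IsStable := by
  intro z hz hzero
  obtain ⟨w, hw⟩ : ∃ w, eval w (homogeneousComponent M p) ≠ 0 := by
    by_contra! h
    exact hM (MvPolynomial.funext fun w => by simpa using h w)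
  obtain ⟨C, hC⟩ := hp.exists_norm_eval_smul_le hz w
  obtain ⟨ψw, hψw0, hψw⟩ := exists_eval_smul_eq_pow_mul hlow w
  obtain ⟨ψz, hψz0, hψz⟩ := exists_eval_smul_eq_pow_mul hlow z
  have hle : ∀ s ∈ Set.Ioi (0 : ℝ), ‖ψw.eval (s : ℂ)‖ ≤ C * ‖ψz.eval (s : ℂ)‖ :=
    fun s (hs : 0 < s) => by
      have := hC s hs
      rw [hψw, hψz, norm_mul, norm_mul, mul_left_comm] at this
      exact le_of_mul_le_mul_left this (by simpa [abs_of_pos hs] using pow_pos hs M)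
  have h0 : ‖ψw.eval ((0 : ℝ) : ℂ)‖ ≤ C * ‖ψz.eval ((0 : ℝ) : ℂ)‖ :=
    ContinuousWithinAt.closure_le (by simp) (by fun_prop) (by fun_prop) hle
  simp [hψw0, hψz0, hzero] at h0
  exact hw h0

theorem IsStable.eval_ofReal_ne_zero (hp : p.IsStable) (hhom : p.IsHomogeneous M)
    {x : σ → ℝ} (hx : ∀ i, 0 < x i) : eval (fun i => (x i : ℂ)) p ≠ 0 := by
  have := hp (Complex.I • fun i => (x i : ℂ)) (by simpa using hx)
  rw [hhom.eval_smul] at this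
  exact right_ne_zero_of_mul this

theorem IsStable.im_eq_zero_of_mem_roots_restrictLine (hp : p.IsStable)
    (hhom : p.IsHomogeneous M) (x : σ → ℝ) {y : σ → ℝ} (hy : ∀ i, 0 < y i) {r : ℂ}
    (hr : r ∈ (restrictLine p (fun i => (x i : ℂ)) (fun i => (y i : ℂ))).roots) : r.im = 0 := by
  have hroot : eval ((fun i => (x i : ℂ)) + r • fun i => (y i : ℂ)) p = 0 := by
    rw [← eval_restrictLine]
    exact Polynomial.isRoot_of_mem_roots hr
  rcases lt_trichotomy r.im 0 with hneg | hzero | hpos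
  · refine absurd ?_ (hp ((-1 : ℂ) • ((fun i => (x i : ℂ)) + r • fun i => (y i : ℂ)))
      fun i => ?_)
    · rw [hhom.eval_smul, hroot, mul_zero]
    · simpa using mul_pos (neg_pos.2 hneg) (hy i)
  · exact hzero
  · exact absurd hroot (hp _ fun i => by simpa using mul_pos hpos (hy i))

theorem IsStable.exists_eval_ofReal_eq_real_mul (hp : p.IsStable) (hhom : p.IsHomogeneous M)
    {x y : σ → ℝ} (hx : ∀ i, 0 < x i) (hy : ∀ i, 0 < y i) :
    ∃ γ : ℝ, eval (fun i => (x i : ℂ)) p = γ * eval (fun i => (y i : ℂ)) p := by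
  have hsum (u v : σ → ℝ) (hv : ∀ i, 0 < v i) (huv : ∀ i, 0 < u i + v i) :
      ∃ γ : ℝ, eval (fun i => (u i : ℂ)) p = γ * eval (fun i => ((u i + v i : ℝ) : ℂ)) p := by
    have := Polynomial.exists_eval_ofReal_eq_real_mul
      (fun r hr => hp.im_eq_zero_of_mem_roots_restrictLine hhom u hv hr) 0 1
      (by simpa [eval_restrictLine, Pi.add_def] using hp.eval_ofReal_ne_zero hhom huv)
    simpa [eval_restrictLine, Pi.add_def] using this
  obtain ⟨γ₁, h₁⟩ := hsum x y hy fun i => add_pos (hx i) (hy i)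
  obtain ⟨γ₂, h₂⟩ := hsum y x hx fun i => add_pos (hy i) (hx i)
  have hγ₂ : (γ₂ : ℂ) ≠ 0 := left_ne_zero_of_mul (h₂ ▸ hp.eval_ofReal_ne_zero hhom hy)
  refine ⟨γ₁ / γ₂, ?_⟩
  simp_rw [h₁, h₂, add_comm (y _)]
  push_cast
  field_simp

theorem IsStable.exists_norm_eq_one_forall_im_mul_coeff_eq_zero (hp : p.IsStable)
    (hhom : p.IsHomogeneous M) : ∃ μ : ℂ, ‖μ‖ = 1 ∧ ∀ m, (μ * coeff m p).im = 0 := by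
  set v := eval (fun _ => ((1 : ℝ) : ℂ)) p
  have hv : v ≠ 0 := hp.eval_ofReal_ne_zero hhom fun _ => one_pos
  refine ⟨‖v‖ / v, by simp [hv], fun m => ?_⟩
  rw [← coeff_C_mul]
  refine im_coeff_eq_zero_of_forall_im_eval_ofReal_eq_zero (fun x hx => ?_) m
  obtain ⟨γ, hγ⟩ := hp.exists_eval_ofReal_eq_real_mul hhom hx fun _ => one_pos
  rw [eval_mul, eval_C, hγ, mul_left_comm, div_mul_cancel₀ _ hv, ← Complex.ofReal_mul,
    Complex.ofReal_im]

end MvPolynomial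

theorem stable_homogeneous_expansion_general (d : ℕ) (p : MvPolynomial (Fin d) ℂ) (M : ℕ)
    (hstable : ∀ z : Fin d → ℂ, (∀ i, 0 < (z i).im) → MvPolynomial.eval z p ≠ 0)
    (hM : MvPolynomial.homogeneousComponent M p ≠ 0)
    (hMmin : ∀ j < M, MvPolynomial.homogeneousComponent j p = 0) :
    (∀ z : Fin d → ℂ, (∀ i, 0 < (z i).im) →
      MvPolynomial.eval z (MvPolynomial.homogeneousComponent M p) ≠ 0) ∧
    ∃ μ : ℂ, ‖μ‖ = 1 ∧
      ∀ m : Fin d →₀ ℕ,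
        (μ * MvPolynomial.coeff m (MvPolynomial.homogeneousComponent M p)).im = 0 := by
  have hstableM : (MvPolynomial.homogeneousComponent M p).IsStable :=
    MvPolynomial.IsStable.homogeneousComponent_of_forall_lt_eq_zero hstable hM hMmin
  exact ⟨hstableM, hstableM.exists_norm_eq_one_forall_im_mul_coeff_eq_zero
    (MvPolynomial.homogeneousComponent_isHomogeneous M p)⟩

/-- **Homogeneous Expansions (Theorem, part a).**
If `p ∈ ℂ[z₁,…,z_d]` has no zeros in `ℍ^d`, `p(0) = 0`, and `M` is the order of
vanishing of `p` at `0` (so the homogeneous expansion is `p = Σ_{j=M}^n P_j` with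
`P_M ≢ 0`), then `P_M` has no zeros in `ℍ^d` and there is a unimodular `μ` such that
`μ P_M` has real coefficients. -/
theorem stable_homogeneous_expansion (d : ℕ) (p : MvPolynomial (Fin d) ℂ) (M : ℕ)
    (hstable : ∀ z : Fin d → ℂ, (∀ i, 0 < (z i).im) → MvPolynomial.eval z p ≠ 0)
    (hp0 : MvPolynomial.eval (0 : Fin d → ℂ) p = 0)
    (hM : MvPolynomial.homogeneousComponent M p ≠ 0)
    (hMmin : ∀ j < M, MvPolynomial.homogeneousComponent j p = 0) :
    (∀ z : Fin d → ℂ, (∀ i, 0 < (z i).im) →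
      MvPolynomial.eval z (MvPolynomial.homogeneousComponent M p) ≠ 0) ∧
    ∃ μ : ℂ, ‖μ‖ = 1 ∧
      ∀ m : Fin d →₀ ℕ,
        (μ * MvPolynomial.coeff m (MvPolynomial.homogeneousComponent M p)).im = 0 :=
  stable_homogeneous_expansion_general d p M hstable hM hMmin
end

section
/- Let p ∈ ℂ[z₁,…,z_d] be pure stable with p(0) = 0 and order of vanishing M at 0, normalized (by multiplying by a unimodular constant) so that the lowest homogeneous term P_M has real coefficients. Write p = A + iB where A, B are polynomials with real coefficients. Then the lowest order homogeneous term of A equals P_M (i.e., A_M = P_M and B_M ≡ 0), and B vanishes to order exactly M+1 at 0 (i.e., B_{M+1} ≢ 0). -/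
/-!
Suppose `B_{M+1} = 0`, so that the two lowest homogeneous parts `p_M` and `p_{M+1} = A_{M+1}` of
`p` are real. Fix `x` in the positive orthant with `p_M(x) ≠ 0`. The polynomial
`q(t) = p(t x) = t^M g(t)` has no zeros in the upper half plane and `g(0) = p_M(x)` and
`g'(0) = p_{M+1}(x)` are real. Since `g'(0) / g(0) = -∑ 1/r` over the roots `r` of `g`, and
`Im (1/r) ≥ 0` for every root, all roots are real; hence `g` and `q` have real coefficients, so
`p(x) = q(1)` is real, i.e. `B(x) = 0`. Thus `B · p_M` vanishes on the positive orthant, so `B = 0`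
and `p = p̄`, and purity makes `p` a unit, contradicting `p(0) = 0`.
-/

open Complex

theorem Complex.eq_zero_of_im_add_I_mul_eq_zero {a b : ℂ} (ha : a.im = 0) (hb : b.im = 0)
    (h : (a + I * b).im = 0) : b = 0 := by
  apply Complex.ext <;> simp_all

namespace Polynomial

theorem multiset_prod_X_sub_C_coeff_one {K : Type*} [Field K] {s : Multiset K} (hs : (0 : K) ∉ s) :
    (s.map fun r => X - C r).prod.coeff 1 =
      -(s.map fun r => X - C r).prod.coeff 0 * (s.map (·⁻¹)).sum := by
  induction s using Multiset.induction_on with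
  | empty => simp [coeff_one]
  | cons r s ih =>
    have hr : r ≠ 0 := fun h => hs (h ▸ Multiset.mem_cons_self r s)
    rw [Multiset.mem_cons, not_or] at hs
    simp only [Multiset.map_cons, Multiset.prod_cons, Multiset.sum_cons, coeff_X_sub_C_mul (a := 0),
      mul_coeff_zero, ih hs.2]
    field_simp
    simp

theorem zero_notMem_roots_of_coeff_zero_ne_zero {R : Type*} [CommRing R] [IsDomain R]
    {g : R[X]} (h0 : g.coeff 0 ≠ 0) : (0 : R) ∉ g.roots := by
  rw [mem_roots', IsRoot.def, ← coeff_zero_eq_eval_zero]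
  exact fun h => h0 h.2

section IsAlgClosed

variable {k : Type*} [Field k] [IsAlgClosed k]

theorem coeff_eq_leadingCoeff_mul_coeff_prod_roots (g : k[X]) (j : ℕ) :
    g.coeff j = g.leadingCoeff * (g.roots.map fun r => X - C r).prod.coeff j := by
  conv_lhs =>
    rw [← C_leadingCoeff_mul_prod_multiset_X_sub_C (IsAlgClosed.card_roots_eq_natDegree (p := g))]
  exact coeff_C_mul _

theorem coeff_one_div_coeff_zero_eq_neg_sum_inv_roots {g : k[X]} (h0 : g.coeff 0 ≠ 0) :
    g.coeff 1 / g.coeff 0 = -(g.roots.map (·⁻¹)).sum := by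
  have hlc : g.leadingCoeff ≠ 0 := leadingCoeff_ne_zero.2 fun hg => h0 (by simp [hg])
  have hprod0 := right_ne_zero_of_mul (coeff_eq_leadingCoeff_mul_coeff_prod_roots g 0 ▸ h0)
  rw [coeff_eq_leadingCoeff_mul_coeff_prod_roots g 1,
    coeff_eq_leadingCoeff_mul_coeff_prod_roots g 0, mul_div_mul_left _ _ hlc,
    multiset_prod_X_sub_C_coeff_one (zero_notMem_roots_of_coeff_zero_ne_zero h0), neg_mul,
    neg_div, mul_div_cancel_left₀ _ hprod0]

end IsAlgClosed

theorem im_eq_zero_of_mem_roots_of_stable {g : ℂ[X]} (hstab : ∀ t : ℂ, 0 < t.im → g.eval t ≠ 0)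
    (h0 : g.coeff 0 ≠ 0) (hratio : (g.coeff 1 / g.coeff 0).im = 0) {r : ℂ} (hr : r ∈ g.roots) :
    r.im = 0 := by
  have hs := zero_notMem_roots_of_coeff_zero_ne_zero h0
  -- `Im r⁻¹ = -Im r / |r|²` is nonnegative on the roots and sums to `-Im (g₁ / g₀) = 0`.
  have hnonneg : ∀ y ∈ (g.roots.map (·⁻¹)).map im, 0 ≤ y := by
    simp only [Multiset.map_map, Multiset.mem_map, forall_exists_index, and_imp,
      forall_apply_eq_imp_iff₂, Function.comp_apply, inv_im]
    intro r hr
    have : r.im ≤ 0 := not_lt.1 fun h => hstab r h (isRoot_of_mem_roots hr)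
    exact div_nonneg (neg_nonneg.2 this) (normSq_nonneg r)
  have hsum : ((g.roots.map (·⁻¹)).map im).sum = 0 := by
    rw [← coe_imAddGroupHom, ← map_multiset_sum, coe_imAddGroupHom, ← neg_eq_zero, ← neg_im,
      ← coeff_one_div_coeff_zero_eq_neg_sum_inv_roots h0, hratio]
  have := Multiset.all_zero_of_le_zero_le_of_sum_eq_zero hnonneg hsum _
    (Multiset.mem_map_of_mem _ (Multiset.mem_map_of_mem _ hr))
  exact (by simpa using this : r.im = 0 ∨ r = 0).resolve_right fun h => hs (h ▸ hr)

theorem im_coeff_eq_zero_of_forall_im_roots_eq_zero {g : ℂ[X]}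
    (hroots : ∀ r ∈ g.roots, r.im = 0) (h0 : g.coeff 0 ≠ 0) (h0re : (g.coeff 0).im = 0) (j : ℕ) :
    (g.coeff j).im = 0 := by
  set h := (g.roots.map fun r => X - C r).prod
  have hreal : h.map (starRingEnd ℂ) = h := by
    simp only [h, Polynomial.map_multiset_prod, Multiset.map_map, Function.comp_def,
      Polynomial.map_sub, map_X, map_C]
    congr 1
    exact Multiset.map_congr rfl fun r hr => by rw [conj_eq_iff_im.2 (hroots r hr)]
  have hh (j : ℕ) : (h.coeff j).im = 0 := by
    rw [← conj_eq_iff_im, ← coeff_map, hreal]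
  have hlc : g.leadingCoeff.im = 0 := by
    have hcoeff0 := coeff_eq_leadingCoeff_mul_coeff_prod_roots g 0
    rw [eq_div_of_mul_eq (right_ne_zero_of_mul (hcoeff0 ▸ h0)) hcoeff0.symm, div_im, h0re, hh 0]
    simp
  rw [coeff_eq_leadingCoeff_mul_coeff_prod_roots, mul_im, hlc, hh]
  simp

theorem im_coeff_eq_zero_of_stable {q : ℂ[X]} {M : ℕ} (hstab : ∀ t : ℂ, 0 < t.im → q.eval t ≠ 0)
    (hlow : ∀ j < M, q.coeff j = 0) (hM : q.coeff M ≠ 0) (hMre : (q.coeff M).im = 0)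
    (hM1re : (q.coeff (M + 1)).im = 0) (j : ℕ) : (q.coeff j).im = 0 := by
  obtain ⟨g, rfl⟩ := X_pow_dvd_iff.2 hlow
  have hshift (k : ℕ) : (X ^ M * g).coeff (k + M) = g.coeff k := coeff_X_pow_mul g M k
  replace hM : g.coeff 0 ≠ 0 := by rwa [← hshift, zero_add]
  replace hMre : (g.coeff 0).im = 0 := by rwa [← hshift, zero_add]
  replace hM1re : (g.coeff 1).im = 0 := by rwa [← hshift, add_comm]
  have hroots : ∀ r ∈ g.roots, r.im = 0 := fun r =>
    im_eq_zero_of_mem_roots_of_stable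
      (fun t ht hg => hstab t ht (by rw [eval_mul, hg, mul_zero])) hM
      (by rw [div_im, hM1re, hMre]; simp)
  rcases lt_or_ge j M with hj | hj
  · rw [hlow j hj, zero_im]
  · obtain ⟨k, rfl⟩ := Nat.exists_eq_add_of_le' hj
    rw [hshift]
    exact im_coeff_eq_zero_of_forall_im_roots_eq_zero hroots hM hMre k

end Polynomial

namespace MvPolynomial

variable {σ : Type*}

theorem map_conj_eq_self_of_im_coeff_eq_zero {f : MvPolynomial σ ℂ}
    (hf : ∀ m, (f.coeff m).im = 0) : map (starRingEnd ℂ) f = f := by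
  ext m
  rw [coeff_map, conj_eq_iff_im]
  exact hf m

theorem im_eval_eq_zero_of_im_coeff_eq_zero {f : MvPolynomial σ ℂ} (hf : ∀ m, (f.coeff m).im = 0)
    {x : σ → ℂ} (hx : ∀ i, (x i).im = 0) : (eval x f).im = 0 := by
  have hx' : (starRingEnd ℂ) ∘ x = x := _root_.funext fun i => conj_eq_iff_im.2 (hx i)
  rw [← conj_eq_iff_im, eval, coe_eval₂Hom, eval₂_comp_left, RingHom.comp_id, hx', ← eval_map,
    map_conj_eq_self_of_im_coeff_eq_zero hf]
  rfl

theorem im_coeff_homogeneousComponent_eq_zero {f : MvPolynomial σ ℂ}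
    (hf : ∀ m, (f.coeff m).im = 0) (j : ℕ) (m : σ →₀ ℕ) :
    ((homogeneousComponent j f).coeff m).im = 0 := by
  rw [coeff_homogeneousComponent]
  split_ifs
  exacts [hf m, rfl]

theorem eq_zero_of_im_coeff_add_I_mul {A B : MvPolynomial σ ℂ} (hA : ∀ m, (A.coeff m).im = 0)
    (hB : ∀ m, (B.coeff m).im = 0) (h : ∀ m, ((A + C I * B).coeff m).im = 0) : B = 0 := by
  ext m
  exact eq_zero_of_im_add_I_mul_eq_zero (hA m) (hB m) (by simpa using h m)

theorem eq_zero_of_eval_eq_zero_of_pos {f : MvPolynomial σ ℂ}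
    (h : ∀ x : σ → ℝ, (∀ i, 0 < x i) → eval (fun i => (x i : ℂ)) f = 0) : f = 0 := by
  refine funext_set (fun _ => ((↑) : ℝ → ℂ) '' Set.Ioi 0)
    (fun _ => (Set.Ioi_infinite 0).image ofReal_injective.injOn) fun z hz => ?_
  choose x hx hxz using Set.mem_univ_pi.1 hz
  rw [map_zero, ← _root_.funext hxz]
  exact h x hx

theorem eq_zero_of_eval_eq_zero_of_pos_of_eval_ne_zero {f g : MvPolynomial σ ℂ} (hg : g ≠ 0)
    (h : ∀ x : σ → ℝ, (∀ i, 0 < x i) → eval (fun i => (x i : ℂ)) g ≠ 0 →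
      eval (fun i => (x i : ℂ)) f = 0) : f = 0 := by
  refine (mul_eq_zero.1 (eq_zero_of_eval_eq_zero_of_pos fun x hx => ?_)).resolve_right hg
  rw [map_mul, mul_eq_zero, or_iff_not_imp_right]
  exact h x hx

variable {R : Type*} [CommSemiring R]

noncomputable def alongRay (x : σ → R) (f : MvPolynomial σ R) : Polynomial R :=
  aeval (fun i => Polynomial.C (x i) * Polynomial.X) f

theorem eval_alongRay (x : σ → R) (f : MvPolynomial σ R) (t : R) :
    (alongRay x f).eval t = eval (t • x) f := by
  induction f using MvPolynomial.induction_on with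
  | C a => simp [alongRay]
  | add f g hf hg => simp_all [alongRay]
  | mul_X f i hf => simp_all [alongRay]; ring

theorem alongRay_monomial (x : σ → R) (u : σ →₀ ℕ) (c : R) :
    alongRay x (monomial u c) =
      Polynomial.C (eval x (monomial u c)) * Polynomial.X ^ u.degree := by
  simp only [alongRay, aeval_monomial, eval_monomial, Finsupp.prod, mul_pow,
    Finset.prod_mul_distrib, Finset.prod_pow_eq_pow_sum, ← Polynomial.C_pow, ← map_prod,
    Polynomial.algebraMap_eq]
  rw [← mul_assoc, ← Polynomial.C_mul]
  rfl

theorem coeff_alongRay (x : σ → R) (f : MvPolynomial σ R) (j : ℕ) :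
    (alongRay x f).coeff j = eval x (homogeneousComponent j f) := by
  induction f using MvPolynomial.induction_on' with
  | monomial u c =>
    rw [alongRay_monomial, Polynomial.coeff_C_mul_X_pow,
      homogeneousComponent_of_mem (isHomogeneous_monomial c (rfl : u.degree = _))]
    split_ifs <;> simp
  | add f g hf hg => simp_all [alongRay]

theorem im_eval_eq_zero_of_stable {p : MvPolynomial σ ℂ} {M : ℕ}
    (hstable : ∀ z : σ → ℂ, (∀ i, 0 < (z i).im) → eval z p ≠ 0)
    (hlow : ∀ j < M, homogeneousComponent j p = 0)
    (hMre : ∀ m, ((homogeneousComponent M p).coeff m).im = 0)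
    (hM1re : ∀ m, ((homogeneousComponent (M + 1) p).coeff m).im = 0)
    {x : σ → ℝ} (hx : ∀ i, 0 < x i)
    (hM : eval (fun i => (x i : ℂ)) (homogeneousComponent M p) ≠ 0) :
    (eval (fun i => (x i : ℂ)) p).im = 0 := by
  set y : σ → ℂ := fun i => (x i : ℂ)
  have hy (i : σ) : (y i).im = 0 := ofReal_im _
  have hq := Polynomial.im_coeff_eq_zero_of_stable (q := alongRay y p) (M := M)
    (fun t ht => by
      rw [eval_alongRay]
      refine hstable _ fun i => ?_
      simpa [y] using mul_pos ht (hx i))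
    (fun j hj => by rw [coeff_alongRay, hlow j hj, map_zero])
    (by rwa [coeff_alongRay])
    (by rw [coeff_alongRay]; exact im_eval_eq_zero_of_im_coeff_eq_zero hMre hy)
    (by rw [coeff_alongRay]; exact im_eval_eq_zero_of_im_coeff_eq_zero hM1re hy)
  rw [← one_smul ℂ y, ← eval_alongRay, Polynomial.eval_eq_sum_range, im_sum]
  simp [hq]

end MvPolynomial

open MvPolynomial

/-- **Proposition (lowest homogeneous terms of a pure stable polynomial).**
Let `p ∈ ℂ[z₁,…,z_d]` be pure stable (no zeros in `ℍ^d` and no common nonconstant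
factor with its reflection `p̄ = map conj p`), with `p(0) = 0` and order of vanishing
`M` at `0`, normalized so that `P_M = homogeneousComponent M p` has real coefficients.
Writing `p = A + iB` with `A, B` real-coefficient polynomials, the lowest order
homogeneous term of `A` equals `P_M` (so `A_M = P_M` and `B_M = 0`), and `B` vanishes
to order exactly `M+1` at `0` (i.e. `B_j = 0` for `j < M+1` and `B_{M+1} ≠ 0`). -/
theorem pure_stable_real_imaginary_lowest_terms (d : ℕ)
    (p A B : MvPolynomial (Fin d) ℂ) (M : ℕ)
    (hstable : ∀ z : Fin d → ℂ, (∀ i, 0 < (z i).im) → MvPolynomial.eval z p ≠ 0)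
    (hpure : ∀ r : MvPolynomial (Fin d) ℂ,
      r ∣ p → r ∣ MvPolynomial.map (starRingEnd ℂ) p → IsUnit r)
    (hp0 : MvPolynomial.eval (0 : Fin d → ℂ) p = 0)
    (hM : MvPolynomial.homogeneousComponent M p ≠ 0)
    (hMmin : ∀ j < M, MvPolynomial.homogeneousComponent j p = 0)
    (hPMreal : ∀ m : Fin d →₀ ℕ,
      (MvPolynomial.coeff m (MvPolynomial.homogeneousComponent M p)).im = 0)
    (hAreal : ∀ m : Fin d →₀ ℕ, (MvPolynomial.coeff m A).im = 0)
    (hBreal : ∀ m : Fin d →₀ ℕ, (MvPolynomial.coeff m B).im = 0)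
    (hp : p = A + MvPolynomial.C Complex.I * B) :
    MvPolynomial.homogeneousComponent M A = MvPolynomial.homogeneousComponent M p ∧
    MvPolynomial.homogeneousComponent M B = 0 ∧
    (∀ j < M + 1, MvPolynomial.homogeneousComponent j B = 0) ∧
    MvPolynomial.homogeneousComponent (M + 1) B ≠ 0 := by
  have hcomp (j : ℕ) : homogeneousComponent j p =
      homogeneousComponent j A + C I * homogeneousComponent j B := by
    rw [hp, map_add, homogeneousComponent_C_mul]
  have hBlow (j : ℕ) (hj : j ≤ M) : homogeneousComponent j B = 0 := by
    refine eq_zero_of_im_coeff_add_I_mul (im_coeff_homogeneousComponent_eq_zero hAreal j)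
      (im_coeff_homogeneousComponent_eq_zero hBreal j) ?_
    rw [← hcomp]
    rcases hj.lt_or_eq with hj | rfl
    · simp [hMmin j hj]
    · exact hPMreal
  refine ⟨by rw [hcomp, hBlow M le_rfl, mul_zero, add_zero], hBlow M le_rfl,
    fun j hj => hBlow j (Nat.lt_succ_iff.1 hj), fun hB1 => ?_⟩
  have hM1real := im_coeff_homogeneousComponent_eq_zero hAreal (M + 1)
  rw [← add_zero (homogeneousComponent (M + 1) A), ← mul_zero (C I), ← hB1, ← hcomp] at hM1real
  have hB : B = 0 := eq_zero_of_eval_eq_zero_of_pos_of_eval_ne_zero hM fun x hx hPM => by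
    have hreal := im_eval_eq_zero_of_stable hstable hMmin hPMreal hM1real hx hPM
    rw [hp, map_add, map_mul, eval_C] at hreal
    exact eq_zero_of_im_add_I_mul_eq_zero
      (im_eval_eq_zero_of_im_coeff_eq_zero hAreal fun i => ofReal_im _)
      (im_eval_eq_zero_of_im_coeff_eq_zero hBreal fun i => ofReal_im _) hreal
  have hunit : IsUnit p := hpure p dvd_rfl <| by
    rw [hp, hB, mul_zero, add_zero, map_conj_eq_self_of_im_coeff_eq_zero hAreal]
  exact not_isUnit_zero (hp0 ▸ hunit.map (eval 0))
end

section
/- Let A_M = a·z₁^r·∏_{j=1}^{M−r}(z₂ + a_j z₁) and B_{M+1} = b·z₁^s·∏_{j=1}^{M+1−s}(z₂ + b_j z₁) be two-variable homogeneous polynomials of degrees M and M+1 respectively, where a, b are nonzero real constants, 0 ≤ a₁ ≤ ⋯ ≤ a_{M−r} and 0 ≤ b₁ ≤ ⋯ ≤ b_{M+1−s}; set a_j = ∞ for j = M−r+1,…,M and b_j = ∞ for j = M+2−s,…,M+1. Suppose A_M/B_{M+1} is a Pick function, i.e., Im(A_M(z)/B_{M+1}(z)) ≥ 0 for all z ∈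 ℍ². Then s = r or s = r+1, and the slopes interlace: b₁ ≤ a₁ ≤ b₂ ≤ a₂ ≤ ⋯ ≤ a_M ≤ b_{M+1}. -/
/-!
Setting `z₁ = 1` (a boundary limit) turns the hypothesis into `Im Q ≤ 0` on `ℍ` for
`Q w = ∏ (w + a_j) / ∏ (w + b_j)`, once evaluation at `z₁ = z₂ = i` has shown `a / b < 0`.
The sum `S w = ∑ arg (w + a_j) - ∑ arg (w + b_j)` is a continuous argument of `Q` on `ℍ` with
`sin S ≤ 0`; it tends to `0` as `w` approaches the real axis to the right of all the points
`-a_j, -b_j`, so by connectedness `S` stays in `[-π, 0]`. Letting `w → -t` from above gives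
`S w → π (#{a_j < t} - #{b_j < t})`, hence `#{a_j < t} ≤ #{b_j < t} ≤ #{a_j < t} + 1` for
every `t` outside the slopes. For large `t` this compares the numbers `M - r` and `M + 1 - s`
of finite slopes, and for `t` between two slopes it is the interlacing.
-/

open Complex Finset Filter Topology Set Real

namespace Complex

theorem add_ofReal_ne_zero_of_im_pos {w : ℂ} (hw : 0 < w.im) (x : ℝ) : w + x ≠ 0 :=
  fun h => hw.ne' (by simpa using congrArg im h)

theorem prod_eq_norm_mul_exp_sum_arg {ι : Type*} [Fintype ι] (z : ι → ℂ) :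
    ∏ i, z i = ((∏ i, ‖z i‖ : ℝ) : ℂ) * exp ((∑ i, arg (z i) : ℝ) * I) := by
  push_cast
  rw [Finset.sum_mul, exp_sum, ← Finset.prod_mul_distrib]
  exact Finset.prod_congr rfl fun i _ => (norm_mul_exp_arg_mul_I (z i)).symm

theorem im_prod_div_prod {ι κ : Type*} [Fintype ι] [Fintype κ] (z : ι → ℂ) (z' : κ → ℂ) :
    ((∏ i, z i) / ∏ k, z' k).im =
      (∏ i, ‖z i‖) / (∏ k, ‖z' k‖) * Real.sin (∑ i, arg (z i) - ∑ k, arg (z' k)) := by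
  rw [prod_eq_norm_mul_exp_sum_arg z, prod_eq_norm_mul_exp_sum_arg z', mul_div_mul_comm,
    ← ofReal_div, ← exp_sub, ← sub_mul, ← ofReal_sub, im_ofReal_mul, exp_ofReal_mul_I_im]

theorem tendsto_arg_ofReal_add_mul_I {x : ℝ} (hx : x ≠ 0) :
    Tendsto (fun ε : ℝ => arg (x + ε * I)) (𝓝[>] 0) (𝓝 (if x < 0 then π else 0)) := by
  have hcont : ContinuousWithinAt (fun ε : ℝ => (x : ℂ) + ε * I) (Ioi 0) 0 := by fun_prop
  split_ifs with hneg
  · refine (tendsto_arg_nhdsWithin_im_nonneg_of_re_neg_of_im_zero (z := x) (by simpa)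
      (by simp)).comp ?_
    refine tendsto_nhdsWithin_iff.2 ⟨by simpa using hcont.tendsto, ?_⟩
    filter_upwards [self_mem_nhdsWithin] with ε hε
    simpa using le_of_lt hε
  · have hx' : 0 < x := lt_of_le_of_ne (not_lt.1 hneg) (Ne.symm hx)
    have := ((continuousAt_arg (x := x) (by simp [mem_slitPlane_iff, hx'])).tendsto).comp
      (by simpa using hcont.tendsto)
    simpa [Function.comp_def, arg_ofReal_of_nonneg hx'.le] using this

theorem tendsto_sum_arg_add_mul_I {ι : Type*} [Fintype ι] {x : ι → ℝ} {t : ℝ}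
    (hx : ∀ i, x i ≠ t) :
    Tendsto (fun ε : ℝ => ∑ i, arg (-t + ε * I + x i)) (𝓝[>] 0)
      (𝓝 ((#{i | x i < t} : ℝ) * π)) := by
  have := tendsto_finsetSum univ fun i _ => tendsto_arg_ofReal_add_mul_I (sub_ne_zero.2 (hx i))
  simp only [Finset.sum_ite, sum_const_zero, add_zero, sum_const, nsmul_eq_mul, sub_neg] at this
  refine this.congr fun ε => sum_congr rfl fun i _ => ?_
  push_cast
  ring_nf

end Complex

theorem Real.subset_Icc_neg_pi_zero_of_sin_nonpos {J : Set ℝ} (hJ : IsPreconnected J)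
    (hsin : ∀ y ∈ J, sin y ≤ 0) {y₀ : ℝ} (hy₀J : y₀ ∈ J) (hy₀ : |y₀| < π) :
    J ⊆ Icc (-π) 0 := by
  have h_pos : ∀ y ∈ J, y ∉ Ioo 0 π := fun y hy h =>
    (hsin y hy).not_gt (sin_pos_of_pos_of_lt_pi h.1 h.2)
  have h_neg : ∀ y ∈ J, y ∉ Ioo (-(2 * π)) (-π) := fun y hy h => by
    have := sin_pos_of_pos_of_lt_pi (x := y + 2 * π) (by linarith [h.1]) (by linarith [h.2])
    rw [sin_add_two_pi] at this
    linarith [hsin y hy]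
  obtain ⟨hy₀l, hy₀r⟩ := abs_lt.1 hy₀
  have hy₀_nonpos : y₀ ≤ 0 := not_lt.1 fun h => h_pos y₀ hy₀J ⟨h, hy₀r⟩
  have := pi_pos
  intro y hy
  constructor
  · by_contra! h
    refine h_neg (max y (-(3 * π / 2))) (hJ.Icc_subset hy hy₀J ⟨le_max_left _ _, ?_⟩) ⟨?_, ?_⟩
    · exact max_le (by linarith) (by linarith)
    · exact lt_max_of_lt_right (by linarith)
    · exact max_lt h (by linarith)
  · by_contra! h
    refine h_pos (min y (π / 2)) (hJ.Icc_subset hy₀J hy ⟨?_, min_le_left _ _⟩) ⟨?_, ?_⟩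
    · exact le_min (by linarith) (by linarith)
    · exact lt_min h (by linarith)
    · exact min_lt_of_right_lt (by linarith)

section argDiff

variable {ι κ : Type*} [Fintype ι] [Fintype κ] (u : ι → ℝ) (v : κ → ℝ)

/-- A continuous branch on `ℍ` of `arg (∏ i, (w + u i) / ∏ k, (w + v k))`. -/
noncomputable def argDiff (w : ℂ) : ℝ := ∑ i, arg (w + u i) - ∑ k, arg (w + v k)

theorem continuousOn_argDiff : ContinuousOn (argDiff u v) {w : ℂ | 0 < w.im} := by
  have hterm : ∀ x : ℝ, ContinuousOn (fun w : ℂ => arg (w + x)) {w : ℂ | 0 < w.im} :=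
    fun x w hw => ((continuousAt_arg (mem_slitPlane_iff.2 (Or.inr (by simpa using hw.ne')))).comp
      (by fun_prop)).continuousWithinAt
  exact (continuousOn_finsetSum _ fun i _ => hterm (u i)).sub
    (continuousOn_finsetSum _ fun k _ => hterm (v k))

theorem tendsto_argDiff {t : ℝ} (hu : ∀ i, u i ≠ t) (hv : ∀ k, v k ≠ t) :
    Tendsto (fun ε : ℝ => argDiff u v (-t + ε * I)) (𝓝[>] 0)
      (𝓝 ((#{i | u i < t} : ℝ) * π - (#{k | v k < t} : ℝ) * π)) :=
  (tendsto_sum_arg_add_mul_I hu).sub (tendsto_sum_arg_add_mul_I hv)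

variable {u v}

theorem sin_argDiff_nonpos {w : ℂ} (hw : 0 < w.im)
    (h : ((∏ i, (w + u i)) / ∏ k, (w + v k)).im ≤ 0) : Real.sin (argDiff u v w) ≤ 0 := by
  rw [im_prod_div_prod] at h
  refine nonpos_of_mul_nonpos_right h (div_pos ?_ ?_) <;>
    exact prod_pos fun _ _ => norm_pos_iff.2 (add_ofReal_ne_zero_of_im_pos hw _)

variable (hQ : ∀ w : ℂ, 0 < w.im → ((∏ i, (w + u i)) / ∏ k, (w + v k)).im ≤ 0)
include hQ

theorem argDiff_mem_Icc {w : ℂ} (hw : 0 < w.im) : argDiff u v w ∈ Icc (-π) 0 := by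
  obtain ⟨A, hA⟩ := Finite.exists_ge u
  obtain ⟨B, hB⟩ := Finite.exists_ge v
  set t := min A B - 1
  have hut : ∀ i, t < u i := fun i => by linarith [min_le_left A B, hA i]
  have hvt : ∀ k, t < v k := fun k => by linarith [min_le_right A B, hB k]
  have hlim := tendsto_argDiff u v (fun i => (hut i).ne') (fun k => (hvt k).ne')
  simp only [filter_false_of_mem fun i _ => (hut i).not_gt,
    filter_false_of_mem fun k _ => (hvt k).not_gt, Finset.card_empty, Nat.cast_zero, zero_mul,
    sub_zero] at hlim
  obtain ⟨ε, hε, hε_pos⟩ :=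
    ((hlim.eventually (Ioo_mem_nhds (neg_neg_of_pos pi_pos) pi_pos)).and
      self_mem_nhdsWithin).exists
  refine Real.subset_Icc_neg_pi_zero_of_sin_nonpos
    ((convex_halfSpace_im_gt 0).isPreconnected.image _ (continuousOn_argDiff u v))
    ?_ (mem_image_of_mem _ (?_ : -t + ε * I ∈ {w : ℂ | 0 < w.im})) (abs_lt.2 hε)
    (mem_image_of_mem _ hw)
  · rintro _ ⟨w, hw, rfl⟩
    exact sin_argDiff_nonpos hw (hQ w hw)
  · simpa using hε_pos

theorem card_filter_lt_le_and_le_succ {t : ℝ} (hu : ∀ i, u i ≠ t) (hv : ∀ k, v k ≠ t) :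
    #{i | u i < t} ≤ #{k | v k < t} ∧ #{k | v k < t} ≤ #{i | u i < t} + 1 := by
  have hlim := tendsto_argDiff u v hu hv
  have hmem := isClosed_Icc.mem_of_tendsto hlim (eventually_nhdsWithin_of_forall
    fun ε (hε : 0 < ε) => argDiff_mem_Icc hQ (by simpa using hε))
  obtain ⟨h₁, h₂⟩ := hmem
  have := pi_pos
  have h₁' : (#{i | u i < t} : ℝ) ≤ #{k | v k < t} := by nlinarith
  have h₂' : (#{k | v k < t} : ℝ) ≤ #{i | u i < t} + 1 := by nlinarith
  exact ⟨by exact_mod_cast h₁', by exact_mod_cast h₂'⟩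

end argDiff

theorem exists_mem_Ioo_ne_of_lt {ι κ : Type*} [Fintype ι] [Fintype κ] (u : ι → ℝ) (v : κ → ℝ)
    {α β : ℝ} (hαβ : α < β) : ∃ t ∈ Ioo α β, (∀ i, u i ≠ t) ∧ ∀ k, v k ≠ t := by
  obtain ⟨t, ht, hnot⟩ := (Ioo_infinite hαβ).exists_notMem_finset (univ.image u ∪ univ.image v)
  simp only [Finset.mem_union, Finset.mem_image, Finset.mem_univ, true_and, not_or,
    not_exists] at hnot
  exact ⟨t, ht, hnot⟩

theorem le_of_card_filter_lt_le_add {m n d : ℕ} {u : Fin m → ℝ} {v : Fin n → ℝ}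
    (hu : Monotone u) (hv : Monotone v)
    (h : ∀ t, (∀ i, u i ≠ t) → (∀ k, v k ≠ t) → #{i | u i < t} ≤ #{k | v k < t} + d)
    {i : Fin m} {k : Fin n} (hki : (k : ℕ) + d ≤ i) : v k ≤ u i := by
  by_contra! hlt
  obtain ⟨t, ⟨hit, htk⟩, hut, hvt⟩ := exists_mem_Ioo_ne_of_lt u v hlt
  have hIic : Finset.Iic i ⊆ ({j | u j < t} : Finset (Fin m)) := fun j hj =>
    mem_filter.2 ⟨mem_univ _, (hu (Finset.mem_Iic.1 hj)).trans_lt hit⟩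
  have hIio : ({j | v j < t} : Finset (Fin n)) ⊆ Finset.Iio k := fun j hj =>
    Finset.mem_Iio.2 (lt_of_not_ge fun hkj => (htk.trans_le (hv hkj)).not_gt (mem_filter.1 hj).2)
  have h₁ := Finset.card_le_card hIic
  have h₂ := Finset.card_le_card hIio
  rw [Fin.card_Iic] at h₁
  rw [Fin.card_Iio] at h₂
  have := h t hut hvt
  omega

section Homogeneous

variable {r s m n : ℕ} {a b : ℝ} {u : Fin m → ℝ} {v : Fin n → ℝ}
  (hPick : ∀ z₁ z₂ : ℂ, 0 < z₁.im → 0 < z₂.im →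
    0 ≤ (((a : ℂ) * z₁ ^ r * ∏ j, (z₂ + (u j : ℂ) * z₁)) /
      ((b : ℂ) * z₁ ^ s * ∏ j, (z₂ + (v j : ℂ) * z₁))).im)
include hPick

theorem im_nonneg_of_pick (hb : b ≠ 0) {w : ℂ} (hw : 0 < w.im) :
    0 ≤ (((a : ℂ) * ∏ j, (w + u j)) / ((b : ℂ) * ∏ j, (w + v j))).im := by
  set F : ℝ → ℂ := fun ε => ((a : ℂ) * (1 + ε * I) ^ r * ∏ j, (w + u j * (1 + ε * I))) /
    ((b : ℂ) * (1 + ε * I) ^ s * ∏ j, (w + v j * (1 + ε * I)))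
  have hF : ContinuousAt F 0 := by
    refine ContinuousAt.div (by fun_prop) (by fun_prop) ?_
    simpa using mul_ne_zero (ofReal_ne_zero.2 hb) (prod_ne_zero_iff.2 fun j _ =>
      add_ofReal_ne_zero_of_im_pos hw (v j))
  have hF0 : F 0 = ((a : ℂ) * ∏ j, (w + u j)) / ((b : ℂ) * ∏ j, (w + v j)) := by simp [F]
  rw [← hF0]
  exact ge_of_tendsto ((continuous_im.continuousAt.comp hF).tendsto.mono_left nhdsWithin_le_nhds)
    (eventually_nhdsWithin_of_forall (s := Set.Ioi 0) fun ε hε =>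
      hPick _ _ (by simpa using hε) hw)

theorem div_neg_of_pick (hdeg : r + m + 1 = s + n) (ha : a ≠ 0) (hb : b ≠ 0)
    (hu : ∀ j, 0 ≤ u j) (hv : ∀ j, 0 ≤ v j) : a / b < 0 := by
  have hprod : ∀ {k : ℕ} (x : Fin k → ℝ),
      ∏ j, (I + x j * I) = ((∏ j, (1 + x j) : ℝ) : ℂ) * I ^ k := fun x => by
    simp only [← one_add_mul, ofReal_prod, prod_mul_distrib, prod_const, card_univ,
      Fintype.card_fin]
    push_cast
    rfl
  have hP : 0 < ∏ j, (1 + u j) := prod_pos fun j _ => by linarith [hu j]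
  have hQ : 0 < ∏ j, (1 + v j) := prod_pos fun j _ => by linarith [hv j]
  have hval : ((a : ℂ) * I ^ r * ∏ j, (I + u j * I)) / ((b : ℂ) * I ^ s * ∏ j, (I + v j * I))
      = -((a * ∏ j, (1 + u j)) / (b * ∏ j, (1 + v j)) : ℝ) * I := by
    have hI : I ^ s * I ^ n = I ^ r * I ^ m * I := by rw [← pow_add, ← pow_add, ← pow_succ, hdeg]
    have hI0 : I ^ r * I ^ m ≠ 0 := by simp
    calc _ = ((a : ℂ) * ∏ j, (1 + u j : ℝ)) / (b * ∏ j, (1 + v j : ℝ)) *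
          (I ^ r * I ^ m / (I ^ s * I ^ n)) := by rw [hprod, hprod]; push_cast; ring
      _ = _ := by rw [hI, div_mul_cancel_left₀ hI0, inv_I]; push_cast; ring
  have h := hPick I I (by simp) (by simp)
  rw [hval, neg_mul, neg_im, im_ofReal_mul, I_im, mul_one, neg_nonneg, mul_div_mul_comm] at h
  exact lt_of_le_of_ne (nonpos_of_mul_nonpos_left h (div_pos hP hQ)) (div_ne_zero ha hb)

end Homogeneous

/-- **Proposition (interlacing of tangents).**
Let `A_M = a z₁^r ∏_{j=1}^{M-r} (z₂ + a_j z₁)` and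
`B_{M+1} = b z₁^s ∏_{j=1}^{M+1-s} (z₂ + b_j z₁)` with `a, b` nonzero reals,
`0 ≤ a₁ ≤ ⋯ ≤ a_{M-r}`, `0 ≤ b₁ ≤ ⋯ ≤ b_{M+1-s}`, and set `a_j = ∞` resp. `b_j = ∞`
for the remaining indices.  If `A_M/B_{M+1}` is a Pick function on `ℍ²`, then `s = r`
or `s = r + 1`, and the slopes interlace: `b₁ ≤ a₁ ≤ b₂ ≤ ⋯ ≤ a_M ≤ b_{M+1}`
(inequalities in `[0,∞]`). -/
theorem homogeneous_pick_interlacing (M r s : ℕ) (hrM : r ≤ M) (hsM : s ≤ M + 1)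
    (a b : ℝ) (ha : a ≠ 0) (hb : b ≠ 0)
    (aseq : Fin (M - r) → ℝ) (bseq : Fin (M + 1 - s) → ℝ)
    (haseq0 : ∀ j, 0 ≤ aseq j) (hbseq0 : ∀ j, 0 ≤ bseq j)
    (haseqmono : Monotone aseq) (hbseqmono : Monotone bseq)
    (hPick : ∀ z₁ z₂ : ℂ, 0 < z₁.im → 0 < z₂.im →
      0 ≤ (((a : ℂ) * z₁ ^ r * ∏ j, (z₂ + (aseq j : ℂ) * z₁)) /
            ((b : ℂ) * z₁ ^ s * ∏ j, (z₂ + (bseq j : ℂ) * z₁))).im) :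
    (s = r ∨ s = r + 1) ∧
    ∀ j : Fin M,
      (if h : (j : ℕ) < M + 1 - s then ENNReal.ofReal (bseq ⟨j, h⟩) else ⊤) ≤
        (if h : (j : ℕ) < M - r then ENNReal.ofReal (aseq ⟨j, h⟩) else ⊤) ∧
      (if h : (j : ℕ) < M - r then ENNReal.ofReal (aseq ⟨j, h⟩) else ⊤) ≤
        (if h : (j : ℕ) + 1 < M + 1 - s then ENNReal.ofReal (bseq ⟨(j : ℕ) + 1, h⟩) else ⊤) := by
  have hab : a / b < 0 := div_neg_of_pick hPick (by omega) ha hb haseq0 hbseq0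
  have hQ (w : ℂ) (hw : 0 < w.im) : ((∏ j, (w + aseq j)) / ∏ j, (w + bseq j)).im ≤ 0 := by
    have h := im_nonneg_of_pick hPick hb hw
    rw [mul_div_mul_comm, ← ofReal_div, im_ofReal_mul] at h
    exact nonpos_of_mul_nonneg_right h hab
  have hcount (t : ℝ) := card_filter_lt_le_and_le_succ hQ (t := t)
  have hlen : M - r ≤ M + 1 - s ∧ M + 1 - s ≤ M - r + 1 := by
    obtain ⟨A, hA⟩ := Finite.exists_le aseq
    obtain ⟨B, hB⟩ := Finite.exists_le bseq
    have hat (j) : aseq j < max A B + 1 := by linarith [le_max_left A B, hA j]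
    have hbt (j) : bseq j < max A B + 1 := by linarith [le_max_right A B, hB j]
    simpa [filter_true_of_mem fun j _ => hat j, filter_true_of_mem fun j _ => hbt j] using
      hcount _ (fun j => (hat j).ne) (fun j => (hbt j).ne)
  refine ⟨by omega, fun j => ⟨?_, ?_⟩⟩ <;> split_ifs <;> first | exact le_top | omega | skip
  · exact ENNReal.ofReal_le_ofReal <| le_of_card_filter_lt_le_add haseqmono hbseqmono
      (d := 0) (fun t hu hv => (hcount t hu hv).1) le_rfl
  · exact ENNReal.ofReal_le_ofReal <| le_of_card_filter_lt_le_add hbseqmono haseqmono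
      (fun t hv hu => (hcount t hu hv).2) le_rfl
end

section
/- Let m and L be positive integers, let q ∈ ℝ[z] with q(0) = 0, q′(0) > 0 and deg q < 2L, and let ψ be analytic on a neighborhood of 0 in ℂ with Im ψ(0) > 0. Define h(z) = q(z) + z^{2L}ψ(z^{1/m}), where z^{1/m} is the branch of the m-th root with branch cut in the lower half plane, so that h is analytic on a domain containing {z : 0 < |z| < ε and Im z ≥ 0} for some ε > 0. Then there exist r, c > 0 such that Im h(z) ≥ c|z|^{2L} for all z with 0 < |z| < r and Im z ≥ 0; in particular h(z) ≠ 0 for all such z. -/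
/-!
Write `y = Im z ≥ 0` and `ρ = |z|`. Since `q` has real coefficients and `|Im z^k| ≤ k y ρ^(k-1)`,
`Im q(z) = q'(0) y + O(y ρ)`. Since `z² - |z|² = 2 i y z`, also `|z^(2L) - ρ^(2L)| ≤ 2L y ρ^(2L-1)`,
so `Im (z^(2L) ψ(w)) ≥ ρ^(2L) (Im ψ(0) - |ψ(w) - ψ(0)|) - O(y ρ)`. As `z → 0` the root
`w = z^(1/m)` tends to `0`, so `|ψ(w) - ψ(0)| ≤ Im ψ(0) / 2`, and the `O(y ρ)` errors are absorbed
by the nonnegative main term `q'(0) y`; what remains is `Im h(z) ≥ Im ψ(0) / 2 · ρ^(2L)`.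
-/

open Complex ComplexConjugate Polynomial Filter Topology Finset

theorem norm_pow_sub_pow_le_of_norm_le {R : Type*} [SeminormedCommRing R] [NormOneClass R]
    {a b : R} {r : ℝ} (ha : ‖a‖ ≤ r) (hb : ‖b‖ ≤ r) (n : ℕ) :
    ‖a ^ n - b ^ n‖ ≤ n * r ^ (n - 1) * ‖a - b‖ := by
  have hr : 0 ≤ r := (norm_nonneg a).trans ha
  rw [← geom_sum₂_mul]
  refine (norm_mul_le _ _).trans (mul_le_mul_of_nonneg_right ?_ (norm_nonneg _))
  calc ‖∑ i ∈ range n, a ^ i * b ^ (n - 1 - i)‖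
      ≤ ∑ i ∈ range n, ‖a‖ ^ i * ‖b‖ ^ (n - 1 - i) :=
        norm_sum_le_of_le _ fun i _ =>
          (norm_mul_le _ _).trans (mul_le_mul (norm_pow_le _ _) (norm_pow_le _ _)
            (norm_nonneg _) (by positivity))
    _ ≤ ∑ _i ∈ range n, r ^ (n - 1) := sum_le_sum fun i hi => by
        calc ‖a‖ ^ i * ‖b‖ ^ (n - 1 - i) ≤ r ^ i * r ^ (n - 1 - i) := by gcongr
          _ = r ^ (n - 1) := by rw [← pow_add, Nat.add_sub_cancel' (by simp at hi; omega)]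
    _ = n * r ^ (n - 1) := by simp

theorem natCast_mul_pow_sub_one_le {x : ℝ} (hx0 : 0 ≤ x) (hx1 : x ≤ 1) {n : ℕ} (hn : n ≠ 1) :
    (n : ℝ) * x ^ (n - 1) ≤ n * x := by
  rcases Nat.eq_zero_or_pos n with rfl | hpos
  · simp
  · exact mul_le_mul_of_nonneg_left (pow_le_of_le_one hx0 hx1 (by omega)) n.cast_nonneg

namespace Complex

theorem abs_im_pow_le (z : ℂ) (n : ℕ) : |(z ^ n).im| ≤ n * ‖z‖ ^ (n - 1) * |z.im| := by
  have hre : ‖(z.re : ℂ)‖ ≤ ‖z‖ := by simpa using abs_re_le_norm z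
  have hsub : z - z.re = z.im * I := Complex.ext (by simp) (by simp)
  calc |(z ^ n).im| = |(z ^ n - (z.re : ℂ) ^ n).im| := by simp [← ofReal_pow]
    _ ≤ ‖z ^ n - (z.re : ℂ) ^ n‖ := abs_im_le_norm _
    _ ≤ n * ‖z‖ ^ (n - 1) * ‖z - z.re‖ := norm_pow_sub_pow_le_of_norm_le le_rfl hre n
    _ = n * ‖z‖ ^ (n - 1) * |z.im| := by simp [hsub]

theorem norm_pow_two_mul_sub_ofReal_norm_pow_le (z : ℂ) (L : ℕ) :
    ‖z ^ (2 * L) - (‖z‖ : ℂ) ^ (2 * L)‖ ≤ 2 * L * ‖z‖ ^ (2 * L - 1) * |z.im| := by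
  have hsq : ‖z ^ 2 - z * conj z‖ = 2 * ‖z‖ * |z.im| := by
    rw [sq, ← mul_sub, sub_conj, norm_mul, norm_mul, norm_real, norm_I, Real.norm_eq_abs,
      abs_mul, abs_two]
    ring
  have h := norm_pow_sub_pow_le_of_norm_le (a := z ^ 2) (b := z * conj z) (r := ‖z‖ ^ 2)
    (by simp) (by simp [sq]) L
  rw [hsq, ← pow_mul, mul_conj', ← pow_mul] at h
  refine h.trans_eq ?_
  rcases Nat.eq_zero_or_pos L with rfl | hL
  · simp
  · obtain ⟨k, rfl⟩ : ∃ k, L = k + 1 := ⟨L - 1, by omega⟩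
    rw [← pow_mul, show 2 * (k + 1) - 1 = 2 * k + 1 by omega, pow_succ]
    push_cast
    ring

theorem le_im_pow_two_mul_mul {z : ℂ} (hz : ‖z‖ ≤ 1) (L : ℕ) (c v : ℂ) :
    ‖z‖ ^ (2 * L) * (c.im - ‖v - c‖) - 2 * L * ‖c‖ * ‖z‖ * |z.im| ≤ (z ^ (2 * L) * v).im := by
  have hsplit : z ^ (2 * L) * v = ((‖z‖ ^ (2 * L) : ℝ) : ℂ) * c
      + (z ^ (2 * L) - (‖z‖ : ℂ) ^ (2 * L)) * c + z ^ (2 * L) * (v - c) := by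
    push_cast; ring
  have hpow : ((2 * L : ℕ) : ℝ) * ‖z‖ ^ (2 * L - 1) ≤ (2 * L : ℕ) * ‖z‖ :=
    natCast_mul_pow_sub_one_le (norm_nonneg z) hz (by omega)
  push_cast at hpow
  have hdev : |((z ^ (2 * L) - (‖z‖ : ℂ) ^ (2 * L)) * c).im| ≤ 2 * L * ‖c‖ * ‖z‖ * |z.im| :=
    calc _ ≤ ‖(z ^ (2 * L) - (‖z‖ : ℂ) ^ (2 * L)) * c‖ := abs_im_le_norm _
      _ ≤ 2 * L * ‖z‖ ^ (2 * L - 1) * |z.im| * ‖c‖ := by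
          rw [norm_mul]; gcongr; exact norm_pow_two_mul_sub_ofReal_norm_pow_le z L
      _ ≤ 2 * L * ‖z‖ * |z.im| * ‖c‖ := by gcongr
      _ = 2 * L * ‖c‖ * ‖z‖ * |z.im| := by ring
  have hpert : |(z ^ (2 * L) * (v - c)).im| ≤ ‖z‖ ^ (2 * L) * ‖v - c‖ :=
    (abs_im_le_norm _).trans_eq (by rw [norm_mul, norm_pow])
  rw [hsplit, add_im, add_im, im_ofReal_mul]
  linarith [neg_abs_le ((z ^ (2 * L) * (v - c)).im),
    neg_abs_le (((z ^ (2 * L) - (‖z‖ : ℂ) ^ (2 * L)) * c).im)]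

theorem half_im_mul_norm_pow_le_im_add_pow_two_mul_mul {z p c v : ℂ} {a C : ℝ} (L : ℕ)
    (hy : 0 ≤ z.im) (hz : ‖z‖ ≤ 1) (hp : |p.im - a * z.im| ≤ C * ‖z‖ * |z.im|)
    (hv : ‖v - c‖ ≤ c.im / 2) (hsmall : ‖z‖ * (C + 2 * L * ‖c‖) ≤ a) :
    c.im / 2 * ‖z‖ ^ (2 * L) ≤ (p + z ^ (2 * L) * v).im := by
  have hpow := le_im_pow_two_mul_mul hz L c v
  rw [abs_of_nonneg hy] at hp hpow
  rw [add_im]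
  linarith [neg_abs_le (p.im - a * z.im),
    mul_le_mul_of_nonneg_left hv (pow_nonneg (norm_nonneg z) (2 * L)),
    mul_nonneg hy (sub_nonneg.2 hsmall)]

theorem tendsto_cpow_one_div_natCast_nhds_zero {m : ℕ} (hm : 0 < m) :
    Tendsto (fun z : ℂ => z ^ (1 / m : ℂ)) (𝓝 0) (𝓝 0) := by
  have hre : 0 < (1 / m : ℂ).re := by
    rw [← ofReal_natCast, ← ofReal_one, ← ofReal_div, ofReal_re]; positivity
  have := continuousAt_cpow_const_of_re_pos (z := 0) (Or.inl zero_re.ge) hre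
  rwa [ContinuousAt, zero_cpow (by simpa using hm.ne')] at this

end Complex

theorem Polynomial.exists_abs_im_eval_map_sub_le (q : ℝ[X]) :
    ∃ C, ∀ z : ℂ, ‖z‖ ≤ 1 →
      |((q.map (algebraMap ℝ ℂ)).eval z).im - q.coeff 1 * z.im| ≤ C * ‖z‖ * |z.im| := by
  set s := range (q.natDegree + 2)
  have h1 : 1 ∈ s := by simp [s]
  refine ⟨∑ k ∈ s, k * |q.coeff k|, fun z hz => ?_⟩
  have him : ((q.map (algebraMap ℝ ℂ)).eval z).im = ∑ k ∈ s, q.coeff k * (z ^ k).im := by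
    rw [eval_eq_sum_range' (n := q.natDegree + 2) (by rw [natDegree_map]; omega), im_sum]
    simp [s, coeff_map]
  rw [him, ← add_sum_erase _ _ h1, pow_one, add_sub_cancel_left, sum_mul, sum_mul]
  refine (abs_sum_le_sum_abs _ _).trans ((sum_le_sum fun k hk => ?_).trans
    (sum_le_sum_of_subset_of_nonneg (erase_subset _ _) fun k _ _ => by positivity))
  have hpow := natCast_mul_pow_sub_one_le (norm_nonneg z) hz (ne_of_mem_erase hk)
  calc |q.coeff k * (z ^ k).im| = |q.coeff k| * |(z ^ k).im| := abs_mul _ _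
    _ ≤ |q.coeff k| * (k * ‖z‖ ^ (k - 1) * |z.im|) := by gcongr; exact abs_im_pow_le z k
    _ ≤ |q.coeff k| * (k * ‖z‖ * |z.im|) := by gcongr
    _ = k * |q.coeff k| * ‖z‖ * |z.im| := by ring

theorem puiseux_branch_lower_bound_general (m L : ℕ) (hm : 0 < m)
    (q : Polynomial ℝ)
    (hq' : 0 < Polynomial.eval 0 (Polynomial.derivative q))
    (ψ : ℂ → ℂ) (hψ : AnalyticAt ℂ ψ 0) (hψ0 : 0 < (ψ 0).im) :
    ∃ r > (0 : ℝ), ∃ c > (0 : ℝ), ∀ z : ℂ, z ≠ 0 → ‖z‖ < r → 0 ≤ z.im →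
      c * ‖z‖ ^ (2 * L) ≤
        (Polynomial.eval z (q.map (algebraMap ℝ ℂ)) +
          z ^ (2 * L) * ψ (Complex.exp (Complex.log z / (m : ℂ)))).im ∧
      Polynomial.eval z (q.map (algebraMap ℝ ℂ)) +
          z ^ (2 * L) * ψ (Complex.exp (Complex.log z / (m : ℂ))) ≠ 0 := by
  have ha : 0 < q.coeff 1 := by simpa [← coeff_zero_eq_eval_zero, coeff_derivative] using hq'
  obtain ⟨C, hC⟩ := q.exists_abs_im_eval_map_sub_le
  have hnear : ∀ᶠ z in 𝓝 (0 : ℂ), dist (ψ (z ^ (1 / m : ℂ))) (ψ 0) < (ψ 0).im / 2 ∧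
      ‖z‖ ≤ 1 ∧ ‖z‖ * (C + 2 * L * ‖ψ 0‖) ≤ q.coeff 1 :=
    (Metric.tendsto_nhds.mp (hψ.continuousAt.tendsto.comp
        (tendsto_cpow_one_div_natCast_nhds_zero hm)) _ (half_pos hψ0)).and
      ((tendsto_norm_zero.eventually_le_const one_pos).and
        ((tendsto_norm_zero.mul_const _).eventually_le_const (by simpa using ha)))
  obtain ⟨r, hr, hball⟩ := Metric.eventually_nhds_iff.mp hnear
  refine ⟨r, hr, (ψ 0).im / 2, half_pos hψ0, fun z hz hzr hy => ?_⟩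
  obtain ⟨hψz, hz1, hzK⟩ := hball (by simpa using hzr)
  rw [dist_eq_norm] at hψz
  rw [div_eq_mul_one_div (log z), ← cpow_def_of_ne_zero hz]
  have hbound := half_im_mul_norm_pow_le_im_add_pow_two_mul_mul L hy hz1 (hC z hz1) hψz.le hzK
  have hpos : 0 < (ψ 0).im / 2 * ‖z‖ ^ (2 * L) := by
    have := norm_pos_iff.2 hz
    positivity
  exact ⟨hbound, ne_of_apply_ne im (hpos.trans_le hbound).ne'⟩

/-- **Theorem (lower bound for Puiseux branches of pure stable type).**
Let `m, L ≥ 1`, `q ∈ ℝ[z]` with `q(0) = 0`, `q'(0) > 0`, `deg q < 2L`, and let `ψ`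
be analytic at `0` with `Im ψ(0) > 0`.  Define
`h(z) = q(z) + z^{2L} ψ(z^{1/m})`, where `z^{1/m} = exp(log z / m)` is the branch of
the `m`-th root with branch cut avoiding the closed upper half plane.  Then there are
`r, c > 0` such that `Im h(z) ≥ c |z|^{2L}` for all `z` with `0 < |z| < r` and
`Im z ≥ 0`; in particular `h(z) ≠ 0` for all such `z`. -/
theorem puiseux_branch_lower_bound (m L : ℕ) (hm : 0 < m) (hL : 0 < L)
    (q : Polynomial ℝ) (hq0 : Polynomial.eval 0 q = 0)
    (hq' : 0 < Polynomial.eval 0 (Polynomial.derivative q))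
    (hqdeg : q.natDegree < 2 * L)
    (ψ : ℂ → ℂ) (hψ : AnalyticAt ℂ ψ 0) (hψ0 : 0 < (ψ 0).im) :
    ∃ r > (0 : ℝ), ∃ c > (0 : ℝ), ∀ z : ℂ, z ≠ 0 → ‖z‖ < r → 0 ≤ z.im →
      c * ‖z‖ ^ (2 * L) ≤
        (Polynomial.eval z (q.map (algebraMap ℝ ℂ)) +
          z ^ (2 * L) * ψ (Complex.exp (Complex.log z / (m : ℂ)))).im ∧
      Polynomial.eval z (q.map (algebraMap ℝ ℂ)) +
          z ^ (2 * L) * ψ (Complex.exp (Complex.log z / (m : ℂ))) ≠ 0 :=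
  puiseux_branch_lower_bound_general m L hm q hq' ψ hψ hψ0
end

section
/- Let p, q ∈ ℂ[z₁,…,z_d] with p having no zeros in ℍ^d, and suppose f = q/p is nonconstant on ℍ^d. Then for c > 0, the inequality |f(z)| < c holds for all z ∈ ℍ^d if and only if the (d+1)-variable polynomial c(w+i)p(z₁,…,z_d) − (w−i)q(z₁,…,z_d) ∈ ℂ[z₁,…,z_d,w] has no zeros in ℍ^{d+1}. -/
/-!
For `z ∈ ℍ^d` we have `p(z) ≠ 0`, so the extended polynomial vanishes at some `(z, w)` with
`w ∈ ℍ` exactly when `f(z) = c (w + i) / (w - i)`. The Möbius map `w ↦ c (w + i) / (w - i)`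
sends `ℍ` onto `{a | c < ‖a‖}`, hence stability of the extended polynomial says precisely that
`‖f‖ ≤ c` on `ℍ^d`. Since `ℍ^d` is connected and `f` is holomorphic and nonconstant there, the
maximum modulus principle turns `‖f‖ ≤ c` into `‖f‖ < c`.
-/

open Complex MvPolynomial Set

def polyUpperHalfPlane (ι : Type*) : Set (ι → ℂ) :=
  univ.pi fun _ => {w | 0 < w.im}

theorem mem_polyUpperHalfPlane {ι : Type*} {z : ι → ℂ} :
    z ∈ polyUpperHalfPlane ι ↔ ∀ i, 0 < (z i).im :=
  mem_univ_pi

theorem isOpen_polyUpperHalfPlane (ι : Type*) [Finite ι] : IsOpen (polyUpperHalfPlane ι) :=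
  isOpen_set_pi finite_univ fun _ _ => isOpen_lt continuous_const continuous_im

theorem convex_polyUpperHalfPlane (ι : Type*) : Convex ℝ (polyUpperHalfPlane ι) :=
  convex_pi fun _ _ => convex_halfSpace_im_gt 0

theorem Complex.norm_sub_I_lt_norm_add_I {w : ℂ} (hw : 0 < w.im) : ‖w - I‖ < ‖w + I‖ := by
  rw [← sq_lt_sq₀ (norm_nonneg _) (norm_nonneg _), Complex.sq_norm, Complex.sq_norm]
  simp only [normSq_apply, sub_re, sub_im, add_re, add_im, I_re, I_im]
  nlinarith

theorem Complex.exists_im_pos_mul_add_I_eq_iff {c : ℝ} (hc : 0 < c) (a : ℂ) :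
    (∃ w : ℂ, 0 < w.im ∧ c * (w + I) = (w - I) * a) ↔ c < ‖a‖ := by
  constructor
  · rintro ⟨w, hw, hwa⟩
    have hlt := norm_sub_I_lt_norm_add_I hw
    have hnorm : c * ‖w + I‖ = ‖w - I‖ * ‖a‖ := by
      simpa [abs_of_pos hc] using congrArg norm hwa
    nlinarith [norm_nonneg a, norm_nonneg (w - I)]
  · intro hca
    have hac : a - c ≠ 0 := fun h => by
      rw [sub_eq_zero.mp h, norm_real, Real.norm_of_nonneg hc.le] at hca
      exact lt_irrefl _ hca
    refine ⟨I * (c + a) / (a - c), ?_, ?_⟩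
    · have hsq : c ^ 2 < normSq a := by
        rw [← Complex.sq_norm]
        exact pow_lt_pow_left₀ hca hc.le two_ne_zero
      have hden : 0 < normSq (a - c) := normSq_pos.mpr hac
      rw [normSq_apply] at hsq
      rw [div_im, ← sub_div]
      apply div_pos _ hden
      simp only [mul_re, mul_im, add_re, add_im, sub_re, sub_im, I_re, I_im, ofReal_re, ofReal_im]
      nlinarith
    · field_simp
      ring

theorem Complex.forall_im_pos_mul_sub_ne_zero_iff {c : ℝ} (hc : 0 < c) {p q : ℂ} (hp : p ≠ 0) :
    (∀ w : ℂ, 0 < w.im → c * (w + I) * p - (w - I) * q ≠ 0) ↔ ‖q / p‖ ≤ c := by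
  have hrel : ∀ w : ℂ, c * (w + I) * p - (w - I) * q = 0 ↔ c * (w + I) = (w - I) * (q / p) := by
    intro w
    rw [sub_eq_zero, mul_div_assoc', eq_div_iff hp]
  simp only [ne_eq, hrel, ← not_lt, ← exists_im_pos_mul_add_I_eq_iff hc, not_exists, not_and]

theorem norm_lt_of_forall_norm_le_of_ne {E F : Type*} [NormedAddCommGroup E] [NormedSpace ℂ E]
    [NormedAddCommGroup F] [NormedSpace ℂ F] [StrictConvexSpace ℝ F] {f : E → F} {U : Set E}
    {c : ℝ} (hU : IsPreconnected U) (ho : IsOpen U) (hd : DifferentiableOn ℂ f U)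
    (hle : ∀ z ∈ U, ‖f z‖ ≤ c) (hnc : ∃ x ∈ U, ∃ y ∈ U, f x ≠ f y) {z : E} (hz : z ∈ U) :
    ‖f z‖ < c := by
  refine (hle z hz).lt_of_ne fun heq => ?_
  have hmax : IsMaxOn (norm ∘ f) U z := fun x hx => by
    simpa [heq] using hle x hx
  obtain ⟨x, hx, y, hy, hxy⟩ := hnc
  have hconst := eqOn_of_isPreconnected_of_isMaxOn_norm hU ho hd hz hmax
  exact hxy ((hconst hx).trans (hconst hy).symm)

theorem differentiableOn_eval_div_eval {ι : Type*} [Fintype ι] (p q : MvPolynomial ι ℂ)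
    {U : Set (ι → ℂ)} (hp : ∀ z ∈ U, eval z p ≠ 0) :
    DifferentiableOn ℂ (fun z => eval z q / eval z p) U :=
  (((AnalyticOnNhd.eval_mvPolynomial q).mono (subset_univ U)).div
    ((AnalyticOnNhd.eval_mvPolynomial p).mono (subset_univ U)) hp).differentiableOn

/-- **Lemma (boundedness via a (d+1)-variable stable polynomial).**
Let `p, q ∈ ℂ[z₁,…,z_d]` with `p` zero-free on `ℍ^d` and `f = q/p` nonconstant on
`ℍ^d`.  Then for each `c > 0`, `|f| < c` on `ℍ^d` if and only if the
(d+1)-variable polynomial `c(w+i)p(z) - (w-i)q(z)` has no zeros in `ℍ^{d+1}`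
(stated here functionally). -/
theorem bounded_iff_extended_stable (d : ℕ) (p q : MvPolynomial (Fin d) ℂ)
    (hstable : ∀ z : Fin d → ℂ, (∀ i, 0 < (z i).im) → MvPolynomial.eval z p ≠ 0)
    (hnc : ∃ z w : Fin d → ℂ, (∀ i, 0 < (z i).im) ∧ (∀ i, 0 < (w i).im) ∧
      MvPolynomial.eval z q / MvPolynomial.eval z p ≠
        MvPolynomial.eval w q / MvPolynomial.eval w p) :
    ∀ c : ℝ, 0 < c →
      ((∀ z : Fin d → ℂ, (∀ i, 0 < (z i).im) →
          ‖MvPolynomial.eval z q / MvPolynomial.eval z p‖ < c) ↔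
        (∀ (z : Fin d → ℂ) (w : ℂ), (∀ i, 0 < (z i).im) → 0 < w.im →
          (c : ℂ) * (w + Complex.I) * MvPolynomial.eval z p
            - (w - Complex.I) * MvPolynomial.eval z q ≠ 0)) := by
  intro c hc
  simp only [← mem_polyUpperHalfPlane] at hstable hnc ⊢
  have hextended : (∀ (z : Fin d → ℂ) (w : ℂ), z ∈ polyUpperHalfPlane (Fin d) → 0 < w.im →
      (c : ℂ) * (w + I) * eval z p - (w - I) * eval z q ≠ 0) ↔
      ∀ z ∈ polyUpperHalfPlane (Fin d), ‖eval z q / eval z p‖ ≤ c :=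
    forall_congr' fun z => forall_comm.trans <|
      forall_congr' fun hz => forall_im_pos_mul_sub_ne_zero_iff hc (hstable z hz)
  rw [hextended]
  refine ⟨fun hlt z hz => (hlt z hz).le, fun hle z hz => ?_⟩
  obtain ⟨x, y, hx, hy, hxy⟩ := hnc
  exact norm_lt_of_forall_norm_le_of_ne (convex_polyUpperHalfPlane _).isPreconnected
    (isOpen_polyUpperHalfPlane _) (differentiableOn_eval_div_eval p q hstable) hle
    ⟨x, hx, y, hy, hxy⟩ hz
end

section
/- Let H be a finite-dimensional complex Hilbert space and let T be an operator on ℂ ⊕ H with positive imaginary part, written in block form T = [[c, β*],[α, S]] with c ∈ ℂ, α, β ∈ H, and S a linear operator on H. Then α − β ∈ Range(S); moreover Ker(S) = Ker(S*), so that H = Ker(S) ⊕ Range(S) is an orthogonal direct sum, and with respect to this decomposition S = [[0, 0],[0, Ŝ]] where Ŝ is the compression of S to Range(S). -/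
/-!
`x ↦ Im ⟪x, T x⟫` is a positive semidefinite Hermitian form on `ℂ ⊕ H`, so every `x` at
which it vanishes lies in its radical: `⟪x, T y⟫ = conj ⟪y, T x⟫` for all `y`. For `x = (0, v)`
with `Im ⟪v, S v⟫ = 0`, which holds when `v ∈ ker S` and when `v ∈ ker S*`, this says
`S* v = S v` and `⟪v, α⟫ = ⟪v, β⟫`. Hence `ker S = ker S*`, and `(ker S)ᗮ = (ker S*)ᗮ = range S`
contains `α - β`.
-/

open ComplexConjugate

theorem LinearMap.conj_apply_swap_eq_of_im_apply_self_eq_zero {E : Type*} [AddCommGroup E]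
    [Module ℂ E] (B : E →ₗ⋆[ℂ] E →ₗ[ℂ] ℂ) (hB : ∀ x, 0 ≤ (B x x).im) {x : E}
    (hx : (B x x).im = 0) (y : E) : conj (B y x) = B x y := by
  have him : ∀ y, (B x y + B y x).im = 0 := by
    intro y
    have hquad : ∀ t : ℝ, 0 ≤ (B y y).im * (t * t) + (B x y + B y x).im * t + 0 := by
      intro t
      have h := hB (x + (t : ℂ) • y)
      simp only [map_add, map_smulₛₗ, LinearMap.add_apply, LinearMap.smul_apply,
        Complex.conj_ofReal, smul_eq_mul, Complex.add_im, Complex.mul_im, Complex.ofReal_re,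
        Complex.ofReal_im, RingHom.id_apply, hx] at h ⊢
      linarith
    have hdisc := discrim_le_zero hquad
    rw [discrim] at hdisc
    nlinarith [sq_nonneg (B x y + B y x).im]
  have hre := him (Complex.I • y)
  simp only [map_smulₛₗ, LinearMap.smul_apply, RingHom.id_apply, Complex.conj_I, smul_eq_mul,
    Complex.add_im, Complex.mul_im, Complex.I_re, Complex.I_im, Complex.neg_re,
    Complex.neg_im] at hre
  have him_y := him y
  rw [Complex.add_im] at him_y
  apply Complex.ext <;> simp only [Complex.conj_re, Complex.conj_im] <;> linarith

section BlockOperator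

variable {H : Type*} [NormedAddCommGroup H] [InnerProductSpace ℂ H]

/-- `blockForm c α β S x y = ⟪x, T y⟫` for the operator `T = [[c, β*], [α, S]]` on
`ℂ ⊕ H`. -/
noncomputable def blockForm (c : ℂ) (α β : H) (S : H →ₗ[ℂ] H) :
    (ℂ × H) →ₗ⋆[ℂ] (ℂ × H) →ₗ[ℂ] ℂ :=
  LinearMap.mk₂'ₛₗ (starRingEnd ℂ) (RingHom.id ℂ)
    (fun x y => conj x.1 * (c * y.1 + inner ℂ β y.2) + inner ℂ x.2 (y.1 • α + S y.2))
    (by intros; simp only [Prod.fst_add, Prod.snd_add, map_add, inner_add_left]; ring)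
    (by
      intros
      simp only [Prod.smul_fst, Prod.smul_snd, smul_eq_mul, map_mul, inner_smul_left]
      ring)
    (by intros; simp only [Prod.fst_add, Prod.snd_add, map_add, inner_add_right, add_smul]; ring)
    (by
      intros
      simp only [Prod.smul_fst, Prod.smul_snd, smul_eq_mul, map_smul, inner_smul_right, mul_smul,
        inner_add_right, RingHom.id_apply]
      ring)

variable {c : ℂ} {α β : H} {S : H →ₗ[ℂ] H}

theorem conj_blockForm_swap_eq_of_im_inner_eq_zero
    (hT : ∀ x, 0 ≤ (blockForm c α β S x x).im) {v : H} (hv : (inner ℂ v (S v)).im = 0)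
    (y : ℂ × H) : conj (blockForm c α β S y (0, v)) = blockForm c α β S (0, v) y :=
  (blockForm c α β S).conj_apply_swap_eq_of_im_apply_self_eq_zero hT
    (by simpa [blockForm] using hv) y

theorem inner_sub_eq_zero_of_im_inner_eq_zero
    (hT : ∀ x, 0 ≤ (blockForm c α β S x x).im) {v : H} (hv : (inner ℂ v (S v)).im = 0) :
    inner ℂ v (α - β) = 0 := by
  simpa [blockForm, inner_sub_right, inner_conj_symm, sub_eq_zero, eq_comm] using
    conj_blockForm_swap_eq_of_im_inner_eq_zero hT hv (1, 0)

variable [FiniteDimensional ℂ H]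

theorem adjoint_apply_eq_of_im_inner_eq_zero
    (hT : ∀ x, 0 ≤ (blockForm c α β S x x).im) {v : H} (hv : (inner ℂ v (S v)).im = 0) :
    LinearMap.adjoint S v = S v :=
  ext_inner_right ℂ fun u => by
    simpa [blockForm, LinearMap.adjoint_inner_left, inner_conj_symm] using
      (conj_blockForm_swap_eq_of_im_inner_eq_zero hT hv (0, u)).symm

theorem ker_eq_ker_adjoint_of_blockForm_im_nonneg (hT : ∀ x, 0 ≤ (blockForm c α β S x x).im) :
    LinearMap.ker S = LinearMap.ker (LinearMap.adjoint S) := by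
  ext v
  simp only [LinearMap.mem_ker]
  constructor
  · intro hv
    rw [adjoint_apply_eq_of_im_inner_eq_zero hT (by simp [hv]), hv]
  · intro hv
    have hzero : inner ℂ v (S v) = 0 := by
      rw [← LinearMap.adjoint_inner_left, hv, inner_zero_left]
    rw [← adjoint_apply_eq_of_im_inner_eq_zero hT (by simp [hzero]), hv]

end BlockOperator

/-- **Lemma (structure of operators with positive imaginary part).**
Let `H` be a finite-dimensional complex Hilbert space and let
`T = [[c, β*],[α, S]]` be an operator on `ℂ ⊕ H` with positive imaginary part,
where the positivity is expressed as `Im ⟪(z,v), T(z,v)⟫ ≥ 0` for all `z ∈ ℂ`,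
`v ∈ H` (with `T(z,v) = (cz + ⟪β, v⟫, zα + Sv)`).  Then `α - β ∈ Range S`;
moreover `Ker S = Ker S*` and `H = Ker S ⊕ Range S` is an orthogonal direct sum
(expressed via `(Ker S)ᗮ = Range S`), so that with respect to this decomposition
`S = [[0,0],[0,Ŝ]]` with `Ŝ` the compression of `S` to `Range S`. -/
theorem pip_block_structure {H : Type*} [NormedAddCommGroup H]
    [InnerProductSpace ℂ H] [FiniteDimensional ℂ H]
    (c : ℂ) (α β : H) (S : H →ₗ[ℂ] H)
    (hPIP : ∀ (z : ℂ) (v : H),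
      0 ≤ ((starRingEnd ℂ) z * (c * z + (inner ℂ β v : ℂ))
            + (inner ℂ v (z • α + S v) : ℂ)).im) :
    α - β ∈ LinearMap.range S ∧
    LinearMap.ker S = LinearMap.ker (LinearMap.adjoint S) ∧
    (LinearMap.ker S)ᗮ = LinearMap.range S := by
  have hT : ∀ x, 0 ≤ (blockForm c α β S x x).im := fun x => hPIP x.1 x.2
  have hker := ker_eq_ker_adjoint_of_blockForm_im_nonneg hT
  have horth : (LinearMap.ker S)ᗮ = LinearMap.range S := by
    rw [hker, LinearMap.orthogonal_ker, LinearMap.adjoint_adjoint]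
  refine ⟨?_, hker, horth⟩
  rw [← horth, Submodule.mem_orthogonal]
  intro v hv
  exact inner_sub_eq_zero_of_im_inner_eq_zero hT (by simp [LinearMap.mem_ker.mp hv])
end
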